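/- Suppose |ψ⟩ = ∑_I c_I|I⟩ satisfies A_l|ψ⟩ = A_{l'}|ψ⟩ and C_l|ψ⟩ = C_{l'}|ψ⟩ for some 1 ≤ l < l' ≤ n. Then c_I = c_{I_{ll'}} for all I (where I_{ll'} flips bits l and l'), and for k ∈ {l,l'} and j ∉ {l,l'} the complex inner products ⟨ψ, A_k ψ⟩, ⟨A_j ψ, A_k ψ⟩, ⟨B_j ψ, A_k ψ⟩, ⟨C_j ψ, A_k ψ⟩ all vanish, because the I-th and I_{ll'}-th summands of each cancel in pairs. -/
import Mathlib


/-- Flip the `k`-th bit of a multi-index `I ∈ {0,1}^n`. -/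
def bitFlip {n : ℕ} (k : Fin n) (I : Fin n → Fin 2) : Fin n → Fin 2 :=
  Function.update I k (1 - I k)

/-- `A_k|ψ⟩ = ∑_I i (-1)^(i_k) c_I |I⟩`. -/
noncomputable def Aop {n : ℕ} (k : Fin n) (ψ : (Fin n → Fin 2) → ℂ) :
    (Fin n → Fin 2) → ℂ :=
  fun I => Complex.I * (-1 : ℂ) ^ ((I k : ℕ)) * ψ I

/-- `B_k|ψ⟩ = ∑_I (-1)^(i_k) c_{I_k} |I⟩`. -/
noncomputable def Bop {n : ℕ} (k : Fin n) (ψ : (Fin n → Fin 2) → ℂ) :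
    (Fin n → Fin 2) → ℂ :=
  fun I => (-1 : ℂ) ^ ((I k : ℕ)) * ψ (bitFlip k I)

/-- `C_k|ψ⟩ = ∑_I i c_{I_k} |I⟩`. -/
noncomputable def Cop {n : ℕ} (k : Fin n) (ψ : (Fin n → Fin 2) → ℂ) :
    (Fin n → Fin 2) → ℂ :=
  fun I => Complex.I * ψ (bitFlip k I)

/-- Hermitian inner product on `(ℂ²)^{⊗n}` in coordinates. -/
lemma bf_self {n : ℕ} (k : Fin n) (I : Fin n → Fin 2) : bitFlip k I k = 1 - I k := by
  simp [bitFlip]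

lemma bf_ne {n : ℕ} {k j : Fin n} (h : j ≠ k) (I : Fin n → Fin 2) : bitFlip k I j = I j := by
  simp [bitFlip, Function.update_of_ne h]

lemma fin2_sub (x : Fin 2) : 1 - (1 - x) = x := by revert x; decide

lemma bf_invol {n : ℕ} (k : Fin n) (I : Fin n → Fin 2) : bitFlip k (bitFlip k I) = I := by
  funext j
  by_cases h : j = k
  · subst h; rw [bf_self, bf_self, fin2_sub]
  · rw [bf_ne h, bf_ne h]

lemma bf_comm {n : ℕ} {k k' : Fin n} (h : k ≠ k') (I : Fin n → Fin 2) :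
    bitFlip k (bitFlip k' I) = bitFlip k' (bitFlip k I) := by
  funext j
  by_cases h1 : j = k
  · subst h1
    simp only [bf_self, bf_ne h]
  · by_cases h2 : j = k'
    · subst h2
      simp only [bf_self, bf_ne h1]
    · rw [bf_ne h1, bf_ne h2, bf_ne h2, bf_ne h1]

lemma neg_pow_flip (x : Fin 2) : ((-1 : ℂ)) ^ (((1 - x : Fin 2) : ℕ)) = -(-1 : ℂ) ^ ((x : ℕ)) := by
  fin_cases x <;> norm_num

lemma fin2_flip_ne (x : Fin 2) : 1 - x ≠ x := by revert x; decide

lemma cancel_sum {n : ℕ} (k l l' : Fin n) (hk : k = l ∨ k = l') (h : l ≠ l')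
    (ψ u : (Fin n → Fin 2) → ℂ)
    (hψ : ∀ I, ψ I = ψ (bitFlip l (bitFlip l' I)))
    (hu : ∀ I, u (bitFlip l (bitFlip l' I)) = u I) :
    ∑ I, u I * (Complex.I * (-1 : ℂ) ^ ((I k : ℕ)) * ψ I) = 0 := by
  apply Finset.sum_involution (fun I _ => bitFlip l (bitFlip l' I))
  · intro I _
    have hσk : (bitFlip l (bitFlip l' I)) k = 1 - I k := by
      rcases hk with rfl | rfl
      · rw [bf_self, bf_ne h]
      · rw [bf_ne (fun hh => h hh.symm), bf_self]
    rw [hu, ← hψ, hσk, neg_pow_flip]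
    ring
  · intro I _ _
    intro hc
    have := congrFun hc l'
    rw [bf_ne (fun hh => h hh.symm), bf_self] at this
    exact fin2_flip_ne _ this
  · intro I _; exact Finset.mem_univ _
  · intro I _
    rw [bf_comm h, bf_invol, bf_invol]

noncomputable def hinner {n : ℕ} (u v : (Fin n → Fin 2) → ℂ) : ℂ :=
  ∑ I, (starRingEnd ℂ) (u I) * v I

/-- if `A_l ψ = A_{l'} ψ` and `C_l ψ = C_{l'} ψ` for `l < l'`,
then `c_I = c_{I_{ll'}}` for all `I`, and for `k ∈ {l,l'}`, `j ∉ {l,l'}` the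
inner products `⟨ψ, A_k ψ⟩`, `⟨A_j ψ, A_k ψ⟩`, `⟨B_j ψ, A_k ψ⟩`,
`⟨C_j ψ, A_k ψ⟩` all vanish. -/
theorem twocommon (n : ℕ) (ψ : (Fin n → Fin 2) → ℂ) (l l' : Fin n)
    (hll' : l < l')
    (hA : Aop l ψ = Aop l' ψ) (hC : Cop l ψ = Cop l' ψ) :
    (∀ I : Fin n → Fin 2, ψ I = ψ (bitFlip l (bitFlip l' I))) ∧
    ∀ k, (k = l ∨ k = l') → ∀ j, j ≠ l → j ≠ l' →
      hinner ψ (Aop k ψ) = 0 ∧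
      hinner (Aop j ψ) (Aop k ψ) = 0 ∧
      hinner (Bop j ψ) (Aop k ψ) = 0 ∧
      hinner (Cop j ψ) (Aop k ψ) = 0 := by
  have hne : l ≠ l' := ne_of_lt hll'
  have hC' : ∀ I, ψ (bitFlip l I) = ψ (bitFlip l' I) := by
    intro I
    have h := congrFun hC I
    simp only [Cop] at h
    exact mul_left_cancel₀ Complex.I_ne_zero h
  have part1 : ∀ I, ψ I = ψ (bitFlip l (bitFlip l' I)) := by
    intro I
    have h := hC' (bitFlip l I)
    rw [bf_invol] at h
    rw [h, bf_comm hne]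
  refine ⟨part1, ?_⟩
  intro k hk j hjl hjl'
  have hσj : ∀ I : Fin n → Fin 2, (bitFlip l (bitFlip l' I)) j = I j := by
    intro I; rw [bf_ne hjl, bf_ne hjl']
  have hσflip : ∀ I : Fin n → Fin 2,
      bitFlip j (bitFlip l (bitFlip l' I)) = bitFlip l (bitFlip l' (bitFlip j I)) := by
    intro I
    rw [bf_comm hjl, bf_comm hjl']
  refine ⟨?_, ?_, ?_, ?_⟩
  · simp only [hinner, Aop]
    exact cancel_sum k l l' hk hne ψ _ part1
      (fun I => congrArg (starRingEnd ℂ) (part1 I).symm)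
  · simp only [hinner, Aop]
    refine cancel_sum k l l' hk hne ψ _ part1 (fun I => ?_)
    apply congrArg (starRingEnd ℂ)
    simp only [hσj, ← part1]
  · simp only [hinner, Bop, Aop]
    refine cancel_sum k l l' hk hne ψ _ part1 (fun I => ?_)
    apply congrArg (starRingEnd ℂ)
    simp only [hσj, hσflip, ← part1]
  · simp only [hinner, Cop, Aop]
    refine cancel_sum k l l' hk hne ψ _ part1 (fun I => ?_)
    apply congrArg (starRingEnd ℂ)
    simp only [hσflip, ← part1]
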